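/- Suppose the four length-N sequences a,b,c,d satisfy: (a,b) and (c,d) are (N,Z)-CZCPs, C(a,c)(τ)+C(b,d)(τ)=0 for all τ, and C(a,d)(τ)+C(b,c)(τ)=0 for all |τ|∈{N−Z,…,N−1}. Then the collection {S_t : t∈Z_2^n} ∪ {S'_{t'} : t'∈Z_2^n}, where S_t={ω^{(q/2)t·y}a, ω^{(q/2)t·y}b : y∈Z_2^n} and S'_{t'}={ω^{(q/2)t'·y}c, ω^{(q/2)t'·y}d : y∈Z_2^n} each ordered cyclically (all a-multiples then all b-multiples, resp. c then d), forms a (2^{n+1}, 2^{n+1}, N, Z)-CZCSS. -/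

import Mathlib

open Finset Complex

/-- ω = exp(2πi/q). -/
noncomputable def omegaq (q : ℕ) : ℂ := Complex.exp (2 * Real.pi * Complex.I / q)

/-- Aperiodic cross-correlation of two length-`N` complex sequences at shift `τ`. -/
noncomputable def acorr (N : ℕ) (x y : ℕ → ℂ) (τ : ℕ) : ℂ :=
  ∑ i ∈ Finset.range (N - τ), x i * (starRingEnd ℂ) (y (i + τ))

/-- `k`-th binary digit of `i`. -/
def bit (i k : ℕ) : ℕ := (i / 2 ^ k) % 2

/-!
Since `q` is even, `ω^(q/2) = -1`, so member `i` of a set is `ε(i mod 2^n)` times `a` (for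
`i < 2^n`) or `b` (resp. `c`, `d`), where `ε = (-1)^(t·y)` is a Walsh function. Sesquilinearity
of the correlation makes every sum in P1–P4 factor as a Walsh sum times a correlation sum of the
seed sequences. For aligned members the Walsh factor is `∑ ε_t ε_t'`, which is `2^n` or `0` by
orthogonality of characters of `(ℤ/2)^n`; under the cyclic shift the seeds are paired as
`(a, a'), (b, b')` except at the two seams, where they meet as `(a, b'), (b, a')`. The CZCP and
cross-correlation hypotheses make each seed sum vanish on the relevant shifts.
-/

lemma acorr_const_mul (N : ℕ) (x y : ℕ → ℂ) (τ : ℕ) (α β : ℂ) :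
    acorr N (fun j => α * x j) (fun j => β * y j) τ = α * starRingEnd ℂ β * acorr N x y τ := by
  simp only [acorr, Finset.mul_sum, map_mul]
  exact Finset.sum_congr rfl fun _ _ => by ring

lemma omegaq_pow_half {q : ℕ} (hq : q ≠ 0) (hq2 : 2 ∣ q) : omegaq q ^ (q / 2) = -1 := by
  have hq0 : (q : ℂ) ≠ 0 := Nat.cast_ne_zero.mpr hq
  have hhalf : ((q / 2 : ℕ) : ℂ) * 2 = q := by exact_mod_cast Nat.div_mul_cancel hq2
  rw [omegaq, ← Complex.exp_nat_mul, ← Complex.exp_pi_mul_I]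
  congr 1
  field_simp
  exact hhalf

noncomputable def walsh (n : ℕ) (v : Fin n → Fin 2) (i : ℕ) : ℂ :=
  (-1) ^ ∑ k : Fin n, (v k : ℕ) * bit i k

lemma bit_of_lt {i n : ℕ} (h : i < 2 ^ n) : bit i n = 0 := by
  simp [bit, Nat.div_eq_of_lt h]

lemma bit_two_pow_add_self {j n : ℕ} (h : j < 2 ^ n) : bit (2 ^ n + j) n = 1 := by
  rw [bit, Nat.add_comm, Nat.add_div_right _ (by positivity), Nat.div_eq_of_lt h]

lemma bit_two_pow_add {j n k : ℕ} (hk : k < n) : bit (2 ^ n + j) k = bit j k := by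
  obtain ⟨l, rfl⟩ := Nat.exists_eq_add_of_lt hk
  rw [bit, bit, show 2 ^ (k + l + 1) + j = 2 ^ k * (2 * 2 ^ l) + j by ring,
    Nat.mul_add_div (by positivity), Nat.mul_add_mod]

-- A non-trivial character of `(ℤ/2)^n` sums to zero: the halves `i` and `2^n + i` of
-- `range (2^(n+1))` differ only in the top bit, so the sum factors through `1 + (-1)^(E top)`.
lemma sum_neg_one_pow_bits_eq_zero {n : ℕ} (E : Fin n → ℕ) (hE : ∃ k, Odd (E k)) :
    ∑ i ∈ range (2 ^ n), (-1 : ℂ) ^ ∑ k : Fin n, E k * bit i k = 0 := by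
  induction n with
  | zero => exact absurd hE (by simp)
  | succ n ih =>
    have hsplit : ∑ i ∈ range (2 ^ (n + 1)), (-1 : ℂ) ^ ∑ k : Fin (n + 1), E k * bit i k
        = (∑ j ∈ range (2 ^ n), (-1 : ℂ) ^ ∑ k : Fin n, E k.castSucc * bit j k)
          * (1 + (-1) ^ E (Fin.last n)) := by
      rw [pow_succ, mul_two, Finset.sum_range_add, mul_add, mul_one, Finset.sum_mul]
      congr 1 <;> refine Finset.sum_congr rfl fun j hj => ?_ <;>
        rw [Finset.mem_range] at hj <;> simp only [Fin.sum_univ_castSucc, Fin.val_castSucc,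
          Fin.val_last, pow_add]
      · rw [bit_of_lt hj, mul_zero, pow_zero, mul_one]
      · simp only [bit_two_pow_add_self hj, mul_one, bit_two_pow_add (Fin.is_lt _)]
    rw [hsplit]
    obtain ⟨k, hk⟩ := hE
    rcases Fin.eq_castSucc_or_eq_last k with ⟨k, rfl⟩ | rfl
    · rw [ih _ ⟨k, hk⟩, zero_mul]
    · rw [hk.neg_one_pow, add_neg_cancel, mul_zero]

lemma conj_walsh (n : ℕ) (v : Fin n → Fin 2) (i : ℕ) :
    starRingEnd ℂ (walsh n v i) = walsh n v i := by
  simp [walsh]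

lemma sum_walsh_mul_conj_self (n : ℕ) (v : Fin n → Fin 2) :
    ∑ j ∈ range (2 ^ n), walsh n v j * starRingEnd ℂ (walsh n v j) = 2 ^ n := by
  have hsq : ∀ j, walsh n v j * walsh n v j = 1 := fun j => by
    rw [walsh, ← pow_add]
    exact Even.neg_one_pow ⟨_, rfl⟩
  simp [conj_walsh, hsq]

lemma sum_walsh_mul_conj_of_ne {n : ℕ} {v w : Fin n → Fin 2} (hvw : v ≠ w) :
    ∑ j ∈ range (2 ^ n), walsh n v j * starRingEnd ℂ (walsh n w j) = 0 := by
  obtain ⟨k, hk⟩ := Function.ne_iff.mp hvw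
  have hodd : Odd ((v k : ℕ) + w k) := by
    have := Fin.val_injective.ne hk
    rw [Nat.odd_add, Nat.odd_iff, Nat.even_iff]
    omega
  rw [← sum_neg_one_pow_bits_eq_zero (fun k => (v k : ℕ) + w k) ⟨k, hodd⟩]
  refine Finset.sum_congr rfl fun j _ => ?_
  rw [conj_walsh, walsh, walsh, ← pow_add, ← Finset.sum_add_distrib]
  simp only [add_mul]

section ScaledPair

variable (m : ℕ) (ε : ℕ → ℂ) (x y : ℕ → ℂ)

noncomputable def scaledPair (i : ℕ) : ℕ → ℂ :=
  fun j => ε (i % m) * if i < m then x j else y j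

variable {m}

lemma scaledPair_of_lt {i : ℕ} (h : i < m) : scaledPair m ε x y i = fun j => ε i * x j := by
  funext j
  rw [scaledPair, if_pos h, Nat.mod_eq_of_lt h]

lemma scaledPair_add_of_lt {i : ℕ} (h : i < m) :
    scaledPair m ε x y (m + i) = fun j => ε i * y j := by
  funext j
  rw [scaledPair, if_neg (Nat.not_lt.mpr le_self_add), Nat.add_mod_left, Nat.mod_eq_of_lt h]

variable (N τ : ℕ) (δ : ℕ → ℂ) (x' y' : ℕ → ℂ)

lemma sum_acorr_scaledPair :
    ∑ i ∈ range (2 * m), acorr N (scaledPair m ε x y i) (scaledPair m δ x' y' i) τ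
      = (∑ j ∈ range m, ε j * starRingEnd ℂ (δ j)) * (acorr N x x' τ + acorr N y y' τ) := by
  rw [two_mul, Finset.sum_range_add, mul_add, Finset.sum_mul, Finset.sum_mul]
  congr 1 <;> refine Finset.sum_congr rfl fun j hj => ?_ <;> rw [Finset.mem_range] at hj
  · rw [scaledPair_of_lt _ _ _ hj, scaledPair_of_lt _ _ _ hj, acorr_const_mul]
  · rw [scaledPair_add_of_lt _ _ _ hj, scaledPair_add_of_lt _ _ _ hj, acorr_const_mul]

-- Under the cyclic shift `i ↦ i + 1 mod 2m` each half is paired with itself except at the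
-- two seams `m - 1 ↦ m` and `2m - 1 ↦ 0`, where `x` meets `y'` and `y` meets `x'`.
lemma sum_acorr_scaledPair_succ (hm : 0 < m) :
    ∑ i ∈ range (2 * m),
        acorr N (scaledPair m ε x y i) (scaledPair m δ x' y' ((i + 1) % (2 * m))) τ
      = (∑ j ∈ range (m - 1), ε j * starRingEnd ℂ (δ (j + 1)))
            * (acorr N x x' τ + acorr N y y' τ)
        + ε (m - 1) * starRingEnd ℂ (δ 0) * (acorr N x y' τ + acorr N y x' τ) := by
  obtain ⟨k, rfl⟩ : ∃ k, m = k + 1 := ⟨m - 1, by omega⟩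
  rw [Nat.add_sub_cancel, two_mul, Finset.sum_range_add, Finset.sum_range_succ,
    Finset.sum_range_succ]
  have hlow : ∀ j ∈ range k,
      acorr N (scaledPair (k + 1) ε x y j)
          (scaledPair (k + 1) δ x' y' ((j + 1) % (k + 1 + (k + 1)))) τ
        = ε j * starRingEnd ℂ (δ (j + 1)) * acorr N x x' τ := fun j hj => by
    rw [Finset.mem_range] at hj
    rw [Nat.mod_eq_of_lt (by omega), scaledPair_of_lt _ _ _ (by omega),
      scaledPair_of_lt _ _ _ (by omega), acorr_const_mul]
  have hhigh : ∀ j ∈ range k,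
      acorr N (scaledPair (k + 1) ε x y (k + 1 + j))
          (scaledPair (k + 1) δ x' y' ((k + 1 + j + 1) % (k + 1 + (k + 1)))) τ
        = ε j * starRingEnd ℂ (δ (j + 1)) * acorr N y y' τ := fun j hj => by
    rw [Finset.mem_range] at hj
    rw [Nat.mod_eq_of_lt (by omega), add_assoc (k + 1) j 1, scaledPair_add_of_lt _ _ _ (by omega),
      scaledPair_add_of_lt _ _ _ (by omega), acorr_const_mul]
  have hseam₁ : acorr N (scaledPair (k + 1) ε x y k)
      (scaledPair (k + 1) δ x' y' ((k + 1) % (k + 1 + (k + 1)))) τ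
        = ε k * starRingEnd ℂ (δ 0) * acorr N x y' τ := by
    have hfirst := scaledPair_add_of_lt δ x' y' (m := k + 1) (i := 0) (by omega)
    rw [add_zero] at hfirst
    rw [Nat.mod_eq_of_lt (by omega), scaledPair_of_lt _ _ _ (by omega), hfirst, acorr_const_mul]
  have hseam₂ : acorr N (scaledPair (k + 1) ε x y (k + 1 + k))
      (scaledPair (k + 1) δ x' y' ((k + 1 + k + 1) % (k + 1 + (k + 1)))) τ
        = ε k * starRingEnd ℂ (δ 0) * acorr N y x' τ := by
    rw [show k + 1 + k + 1 = k + 1 + (k + 1) by ring, Nat.mod_self,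
      scaledPair_add_of_lt _ _ _ (by omega), scaledPair_of_lt _ _ _ (by omega), acorr_const_mul]
  rw [Finset.sum_congr rfl hlow, Finset.sum_congr rfl hhigh, hseam₁, hseam₂, Finset.sum_mul]
  simp only [mul_add, Finset.sum_add_distrib]
  ring

end ScaledPair

/-- Theorem 1, abstract form: from two CZCPs (a,b), (c,d) with the two
extra cross-correlation properties, the family {S_t} ∪ {S'_{t'}} (t,t' ∈ Z_2^n) is a
(2^{n+1}, 2^{n+1}, N, Z)-CZCSS.  Sets are indexed by `p : Bool × (Fin n → Fin 2)`
(`false` = unprimed S, `true` = primed S'), and within a set the 2^{n+1} members are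
indexed by `i < 2^{n+1}`: first the scaled copies of a (resp. c) for y = bits of i,
then the scaled copies of b (resp. d). -/
theorem stmt_16 (q n N Z : ℕ) (hq : 2 ≤ q) (hq2 : 2 ∣ q)
    (a b c d : ℕ → ℂ)
    (hab1 : ∀ τ : ℕ, (1 ≤ τ ∧ τ ≤ Z) ∨ (N - Z ≤ τ ∧ τ ≤ N - 1) →
      acorr N a a τ + acorr N b b τ = 0)
    (hab2 : ∀ τ : ℕ, N - Z ≤ τ → τ ≤ N - 1 →
      acorr N a b τ + acorr N b a τ = 0)
    (hcd1 : ∀ τ : ℕ, (1 ≤ τ ∧ τ ≤ Z) ∨ (N - Z ≤ τ ∧ τ ≤ N - 1) →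
      acorr N c c τ + acorr N d d τ = 0)
    (hcd2 : ∀ τ : ℕ, N - Z ≤ τ → τ ≤ N - 1 →
      acorr N c d τ + acorr N d c τ = 0)
    (hac : ∀ τ : ℕ, acorr N a c τ + acorr N b d τ = 0)
    (hac' : ∀ τ : ℕ, acorr N c a τ + acorr N d b τ = 0)
    (had : ∀ τ : ℕ, N - Z ≤ τ → τ ≤ N - 1 →
      acorr N a d τ + acorr N b c τ = 0)
    (had' : ∀ τ : ℕ, N - Z ≤ τ → τ ≤ N - 1 →
      acorr N d a τ + acorr N c b τ = 0)
    (memb : Bool × (Fin n → Fin 2) → ℕ → ℕ → ℂ)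
    (hmemb : ∀ p i j, memb p i j =
      omegaq q ^ (q / 2 * ∑ k : Fin n, (p.2 k : ℕ) * bit (i % 2 ^ n) (k : ℕ)) *
        (if p.1 = false then (if i < 2 ^ n then a j else b j)
         else (if i < 2 ^ n then c j else d j))) :
    -- P1
    (∀ p, ∀ τ : ℕ, (1 ≤ τ ∧ τ ≤ Z) ∨ (N - Z ≤ τ ∧ τ ≤ N - 1) →
      ∑ i ∈ Finset.range (2 ^ (n + 1)), acorr N (memb p i) (memb p i) τ = 0) ∧
    -- P2
    (∀ p, ∀ τ : ℕ, N - Z ≤ τ → τ ≤ N - 1 →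
      ∑ i ∈ Finset.range (2 ^ (n + 1)),
        acorr N (memb p i) (memb p ((i + 1) % 2 ^ (n + 1))) τ = 0) ∧
    -- P3
    (∀ p p', p ≠ p' → ∀ τ : ℕ,
        τ = 0 ∨ (1 ≤ τ ∧ τ ≤ Z) ∨ (N - Z ≤ τ ∧ τ ≤ N - 1) →
      ∑ i ∈ Finset.range (2 ^ (n + 1)), acorr N (memb p i) (memb p' i) τ = 0) ∧
    -- P4
    (∀ p p', p ≠ p' → ∀ τ : ℕ, N - Z ≤ τ → τ ≤ N - 1 →
      ∑ i ∈ Finset.range (2 ^ (n + 1)),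
        acorr N (memb p i) (memb p' ((i + 1) % 2 ^ (n + 1))) τ = 0) := by
  have hmemb' : ∀ fl v, memb (fl, v) =
      scaledPair (2 ^ n) (walsh n v) (bif fl then c else a) (bif fl then d else b) := by
    intro fl v
    funext i j
    rw [hmemb, pow_mul, omegaq_pow_half (by omega) hq2, scaledPair]
    cases fl <;> by_cases hi : i < 2 ^ n <;> simp [hi, walsh]
  have hcyclic : ∀ p p', ∀ τ : ℕ, N - Z ≤ τ → τ ≤ N - 1 →
      ∑ i ∈ range (2 ^ (n + 1)), acorr N (memb p i) (memb p' ((i + 1) % 2 ^ (n + 1))) τ = 0 := by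
    rintro ⟨fl, v⟩ ⟨fl', w⟩ τ hτ₁ hτ₂
    rw [hmemb', hmemb', pow_succ', sum_acorr_scaledPair_succ _ _ _ _ _ _ _ _ (by positivity)]
    cases fl <;> cases fl' <;> simp only [cond_false, cond_true, hab1 τ (.inr ⟨hτ₁, hτ₂⟩),
      hab2 τ hτ₁ hτ₂, hcd1 τ (.inr ⟨hτ₁, hτ₂⟩), hcd2 τ hτ₁ hτ₂, hac, hac', had τ hτ₁ hτ₂,
      add_comm (acorr N c b τ), had' τ hτ₁ hτ₂, mul_zero, add_zero]
  refine ⟨?_, fun p => hcyclic p p, ?_, fun p p' _ => hcyclic p p'⟩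
  · rintro ⟨fl, v⟩ τ hτ
    rw [hmemb', pow_succ', sum_acorr_scaledPair, sum_walsh_mul_conj_self]
    cases fl
    · rw [cond_false, cond_false, hab1 τ hτ, mul_zero]
    · rw [cond_true, cond_true, hcd1 τ hτ, mul_zero]
  · rintro ⟨fl, v⟩ ⟨fl', w⟩ hne τ -
    rw [hmemb', hmemb', pow_succ', sum_acorr_scaledPair]
    by_cases hfl : fl = fl'
    · subst hfl
      rw [sum_walsh_mul_conj_of_ne fun hvw => hne (by rw [hvw]), zero_mul]
    · cases fl <;> cases fl' <;>
        first | exact absurd rfl hfl | simp only [cond_false, cond_true, hac, hac', mul_zero]
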